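/- arXiv:2303.13616 — 3 statements merged into one kernel-verified Lean document; each statement's English description precedes it below -/
import Mathlib

section
/- Let X and Y be independent real-valued random variables, where Y is symmetrically distributed about 0 and admits a density f_Y with respect to Lebesgue measure that is decreasing in |y|. Then for every t > 0, P(|X + Y| ≥ t) ≥ P(|Y| ≥ t). -/
open MeasureTheory ProbabilityTheory
open scoped ENNReal

open Set in
lemma key_interval (fY : ℝ → ℝ≥0∞) (hfY : Measurable fY)
    (hdec : ∀ y₁ y₂ : ℝ, |y₁| ≤ |y₂| → fY y₂ ≤ fY y₁) (t x : ℝ) (ht : 0 < t) :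
    (volume.withDensity fY) (Set.Ioo (-t - x) (t - x)) ≤
      (volume.withDensity fY) (Set.Ioo (-t) t) := by
  set μ := volume.withDensity fY with hμ
  set A := Set.Ioo (-t - x) (t - x) with hA
  set B := Set.Ioo (-t) t with hB
  have hAm : MeasurableSet A := measurableSet_Ioo
  have hBm : MeasurableSet B := measurableSet_Ioo
  have hAB : μ (A ∩ B) + μ (A \ B) = μ A := measure_inter_add_diff A hBm
  have hBA : μ (B ∩ A) + μ (B \ A) = μ B := measure_inter_add_diff B hAm
  -- volumes of difference sets are equal
  have hvolA : volume A = ENNReal.ofReal (2 * t) := by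
    rw [Real.volume_Ioo]; ring_nf
  have hvolB : volume B = ENNReal.ofReal (2 * t) := by
    rw [Real.volume_Ioo]; ring_nf
  have hfin : volume (A ∩ B) ≠ ∞ := by
    refine ne_of_lt (lt_of_le_of_lt (measure_mono Set.inter_subset_left) ?_)
    rw [hvolA]; exact ENNReal.ofReal_lt_top
  have hvdiff : volume (A \ B) = volume (B \ A) := by
    have h1 : volume (A \ B) = volume A - volume (A ∩ B) := by
      rw [← Set.diff_self_inter]
      exact measure_diff Set.inter_subset_left (hAm.inter hBm).nullMeasurableSet hfin
    have h2 : volume (B \ A) = volume B - volume (B ∩ A) := by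
      rw [← Set.diff_self_inter]
      exact measure_diff Set.inter_subset_left ((hBm.inter hAm).nullMeasurableSet)
        (by rwa [Set.inter_comm] at hfin)
    rw [h1, h2, hvolA, hvolB, Set.inter_comm]
  -- bound μ (A \ B) ≤ fY t * volume (A \ B)
  have hABsub : A \ B ⊆ {y : ℝ | t ≤ |y|} := by
    intro y hy
    have hnB : y ∉ B := hy.2
    simp only [hB, Set.mem_Ioo, not_and_or, not_lt] at hnB
    rcases hnB with h | h
    · exact le_trans (by linarith : t ≤ -y) (neg_le_abs y)
    · exact h.trans (le_abs_self y)
  have hupper : μ (A \ B) ≤ fY t * volume (A \ B) := by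
    rw [hμ, withDensity_apply _ (hAm.diff hBm)]
    calc ∫⁻ y in A \ B, fY y ≤ ∫⁻ _ in A \ B, fY t := by
          refine setLIntegral_mono measurable_const (fun y hy => ?_)
          exact hdec t y (by simpa [abs_of_pos ht] using hABsub hy)
      _ = fY t * volume (A \ B) := by rw [setLIntegral_const, mul_comm]
  have hlower : fY t * volume (B \ A) ≤ μ (B \ A) := by
    rw [hμ, withDensity_apply _ (hBm.diff hAm)]
    calc fY t * volume (B \ A) = ∫⁻ _ in B \ A, fY t := by rw [setLIntegral_const, mul_comm]
      _ ≤ ∫⁻ y in B \ A, fY y := by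
          refine setLIntegral_mono hfY (fun y hy => ?_)
          refine hdec y t ?_
          have : y ∈ B := hy.1
          rw [hB, Set.mem_Ioo] at this
          rw [abs_of_pos ht]
          exact abs_le.mpr ⟨le_of_lt this.1, le_of_lt this.2⟩
  have : μ (A \ B) ≤ μ (B \ A) := hupper.trans (hvdiff ▸ hlower)
  calc μ A = μ (A ∩ B) + μ (A \ B) := hAB.symm
    _ ≤ μ (B ∩ A) + μ (B \ A) := by rw [Set.inter_comm]; exact add_le_add le_rfl this
    _ = μ B := hBA

/-- If `X` and `Y` are independent real random variables, with `Y` having a density that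
is symmetric about `0` and decreasing in `|y|`, then `P(|X + Y| ≥ t) ≥ P(|Y| ≥ t)` for
every `t > 0`. -/
theorem abs_add_noise_ge_prob {Ω : Type*} [MeasurableSpace Ω] (P : Measure Ω)
    [IsProbabilityMeasure P] (X Y : Ω → ℝ)
    (hX : Measurable X) (hY : Measurable Y)
    (hindep : IndepFun X Y P)
    (fY : ℝ → ℝ≥0∞) (hfY : Measurable fY)
    (hdens : Measure.map Y P = MeasureTheory.volume.withDensity fY)
    (hsymm : ∀ y : ℝ, fY (-y) = fY y)
    (hdec : ∀ y₁ y₂ : ℝ, |y₁| ≤ |y₂| → fY y₂ ≤ fY y₁) :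
    ∀ t : ℝ, 0 < t → P {ω | t ≤ |Y ω|} ≤ P {ω | t ≤ |X ω + Y ω|} := by
  intro t ht
  set ν := volume.withDensity fY with hν
  have hνprob : IsProbabilityMeasure ν := hdens ▸ Measure.isProbabilityMeasure_map hY.aemeasurable
  -- pointwise in x bound
  have hkey : ∀ x : ℝ, ν {y : ℝ | t ≤ |y|} ≤ ν {y : ℝ | t ≤ |x + y|} := by
    intro x
    have h1 : {y : ℝ | t ≤ |x + y|} = (Set.Ioo (-t - x) (t - x))ᶜ := by
      ext y
      simp only [Set.mem_setOf_eq, Set.mem_compl_iff, Set.mem_Ioo, not_and_or, not_lt,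
        le_abs, abs_le, not_and_or, not_lt]
      constructor
      · rintro (h | h)
        · right; linarith
        · left; linarith
      · rintro (h | h)
        · right; linarith
        · left; linarith
    have h2 : {y : ℝ | t ≤ |y|} = (Set.Ioo (-t) t)ᶜ := by
      ext y
      simp only [Set.mem_setOf_eq, Set.mem_compl_iff, Set.mem_Ioo, not_and_or, not_lt, le_abs]
      constructor
      · rintro (h | h)
        · right; exact h
        · left; linarith
      · rintro (h | h)
        · right; linarith
        · left; exact h
    rw [h1, h2, measure_compl measurableSet_Ioo (measure_ne_top ν _),
      measure_compl measurableSet_Ioo (measure_ne_top ν _)]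
    exact tsub_le_tsub_left (key_interval fY hfY hdec t x ht) _
  -- joint law is product
  have hjoint : Measure.map (fun ω => (X ω, Y ω)) P = (Measure.map X P).prod (Measure.map Y P) :=
    (indepFun_iff_map_prod_eq_prod_map_map hX.aemeasurable hY.aemeasurable).mp hindep
  have hsm : MeasurableSet {p : ℝ × ℝ | t ≤ |p.1 + p.2|} :=
    measurableSet_le measurable_const ((measurable_fst.add measurable_snd).abs)
  have hXprob : IsProbabilityMeasure (Measure.map X P) := Measure.isProbabilityMeasure_map hX.aemeasurable
  have hR : P {ω | t ≤ |X ω + Y ω|}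
      = ∫⁻ x, ν {y : ℝ | t ≤ |x + y|} ∂(Measure.map X P) := by
    have : P {ω | t ≤ |X ω + Y ω|}
        = Measure.map (fun ω => (X ω, Y ω)) P {p : ℝ × ℝ | t ≤ |p.1 + p.2|} := by
      rw [Measure.map_apply (hX.prodMk hY) hsm]
      rfl
    rw [this, hjoint, hdens, Measure.prod_apply hsm]
    rfl
  have hL : P {ω | t ≤ |Y ω|} = ν {y : ℝ | t ≤ |y|} := by
    rw [← hdens, Measure.map_apply hY (measurableSet_le measurable_const measurable_abs)]
    rfl
  rw [hL, hR]
  calc ν {y : ℝ | t ≤ |y|} = ∫⁻ _, ν {y : ℝ | t ≤ |y|} ∂(Measure.map X P) := by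
        rw [lintegral_const, measure_univ, mul_one]
    _ ≤ ∫⁻ x, ν {y : ℝ | t ≤ |x + y|} ∂(Measure.map X P) := lintegral_mono fun x => hkey x
end

section
/- Let X_n ~ Binomial(n, p) and Y_n ~ Binomial(n, q) be independent with 0 < p < q < 1, and let F_{X_n} be the distribution function of X_n. Then F_{X_n}(Y_n) converges in probability to 1 as n → ∞. -/
/-!
Split at the midpoint `m = (p + q) / 2`. The masses of `Binomial(n, r)` are the Bernstein
basis polynomials at `r`, whose variance identity gives Chebyshev's bound: the law puts mass
at most `1 / (4 c² n)` on `{k : |r - k / n| ≥ c}`. Hence `Yₙ ≥ m n` with probability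
`1 - O(1/n)`, and whenever `Yₙ ≥ m n` we have `F_{Xₙ}(Yₙ) ≥ P(Xₙ ≤ m n) = 1 - O(1/n)`.
-/

open MeasureTheory ProbabilityTheory Filter Finset unitInterval
open scoped ENNReal NNReal

set_option linter.deprecated false

theorem ProbabilityTheory.hasLaw_of_map_eq {Ω 𝓧 : Type*} [MeasurableSpace Ω]
    [MeasurableSpace 𝓧] {P : Measure Ω} {X : Ω → 𝓧} {μ : Measure 𝓧} [NeZero μ]
    (h : P.map X = μ) : HasLaw X μ P where
  aemeasurable := .of_map_ne_zero (h ▸ NeZero.ne μ)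
  map_eq := h

theorem bernstein_sum_le_of_le_abs_sub {n : ℕ} (hn : n ≠ 0) (x : I) {c : ℝ} (hc : 0 < c)
    (A : Finset (Fin (n + 1))) (hA : ∀ k ∈ A, c ≤ |(x : ℝ) - k / n|) :
    ∑ k ∈ A, bernstein n k x ≤ x * (1 - x) / (c ^ 2 * n) := by
  calc ∑ k ∈ A, bernstein n k x
      ≤ ∑ k ∈ A, ((x - k / n : ℝ) / c) ^ 2 * bernstein n k x := by
        refine sum_le_sum fun k hk => le_mul_of_one_le_left bernstein_nonneg ?_
        rw [div_pow, one_le_div (by positivity)]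
        exact (pow_le_pow_left₀ hc.le (hA k hk) 2).trans_eq (sq_abs _)
    _ ≤ ∑ k : Fin (n + 1), ((x - k / n : ℝ) / c) ^ 2 * bernstein n k x :=
        sum_le_univ_sum_of_nonneg fun k => mul_nonneg (sq_nonneg _) bernstein_nonneg
    _ = (∑ k : Fin (n + 1), (x - bernstein.z k : ℝ) ^ 2 * bernstein n k x) / c ^ 2 := by
        rw [sum_div]
        refine sum_congr rfl fun k _ => ?_
        simp only [bernstein.z, div_pow]
        ring
    _ = x * (1 - x) / (c ^ 2 * n) := by
        rw [bernstein.variance hn, div_div, mul_comm (n : ℝ)]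

namespace PMF

noncomputable def binomialMeasure (r : ℝ≥0) (hr : r ≤ 1) (n : ℕ) : Measure ℕ :=
  (binomial r hr n).toMeasure.map (fun i : Fin (n + 1) => (i : ℕ))

instance (r : ℝ≥0) (hr : r ≤ 1) (n : ℕ) : IsProbabilityMeasure (binomialMeasure r hr n) :=
  Measure.isProbabilityMeasure_map (measurable_of_countable _).aemeasurable

variable {r : ℝ≥0} {hr : r ≤ 1} {n : ℕ}

theorem binomial_apply_toReal (k : Fin (n + 1)) :
    (binomial r hr n k).toReal = bernstein n k ⟨r, r.2, hr⟩ := by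
  rw [binomial_apply, bernstein_apply]
  simp only [← ENNReal.coe_one, ← ENNReal.coe_sub, Fin.val_last, ENNReal.toReal_mul,
    ENNReal.toReal_pow, ENNReal.coe_toReal, NNReal.coe_sub hr, NNReal.coe_one,
    ENNReal.toReal_natCast]
  ring

theorem binomialMeasure_real_le_of_le_abs_sub (hn : n ≠ 0) {c : ℝ} (hc : 0 < c) {s : Set ℕ}
    (hs : ∀ k ∈ s, c ≤ |(r : ℝ) - k / n|) :
    (binomialMeasure r hr n).real s ≤ 1 / (4 * c ^ 2 * n) := by
  classical
  let x : I := ⟨r, r.2, hr⟩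
  calc _ = ∑ k ∈ univ.filter (fun k : Fin (n + 1) => (k : ℕ) ∈ s), bernstein n k x := by
        rw [binomialMeasure, measureReal_def,
          Measure.map_apply (measurable_of_countable _) .of_discrete,
          toMeasure_apply_fintype, ENNReal.toReal_sum fun k _ =>
            ne_top_of_le_ne_top (apply_ne_top _ k) (Set.indicator_le_self _ _ k), sum_filter]
        refine sum_congr rfl fun k _ => ?_
        by_cases hk : (k : ℕ) ∈ s <;> simp [hk, binomial_apply_toReal, x]
    _ ≤ x * (1 - x) / (c ^ 2 * n) :=
        bernstein_sum_le_of_le_abs_sub hn x hc _ fun k hk => hs k (mem_filter.1 hk).2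
    _ ≤ (1 / 4) / (c ^ 2 * n) := by
        gcongr
        nlinarith [sq_nonneg ((x : ℝ) - 1 / 2)]
    _ = 1 / (4 * c ^ 2 * n) := by ring

theorem binomialMeasure_real_lt_le (hn : n ≠ 0) {a c : ℝ} (hc : 0 < c) (har : a + c ≤ r) :
    (binomialMeasure r hr n).real {k | k < a * n} ≤ 1 / (4 * c ^ 2 * n) :=
  binomialMeasure_real_le_of_le_abs_sub hn hc fun k (hk : k < a * n) => by
    have : k / n ≤ a := (div_le_iff₀ (by positivity)).2 hk.le
    exact le_trans (by linarith) (le_abs_self _)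

theorem binomialMeasure_real_gt_le (hn : n ≠ 0) {a c : ℝ} (hc : 0 < c) (hra : r + c ≤ a) :
    (binomialMeasure r hr n).real {k | a * n < k} ≤ 1 / (4 * c ^ 2 * n) :=
  binomialMeasure_real_le_of_le_abs_sub hn hc fun k (hk : a * n < k) => by
    have : a ≤ k / n := (le_div_iff₀ (by positivity)).2 hk.le
    rw [abs_sub_comm]
    exact le_trans (by linarith) (le_abs_self _)

theorem one_sub_le_binomialMeasure_real_le (hn : n ≠ 0) {a c : ℝ} (hc : 0 < c)
    (hra : r + c ≤ a) {y : ℕ} (hay : a * n ≤ y) :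
    1 - 1 / (4 * c ^ 2 * n) ≤ (binomialMeasure r hr n).real {k | k ≤ y} := by
  have hcompl : {k : ℕ | k ≤ y}ᶜ ⊆ {k | a * n < k} := fun k (hk : ¬k ≤ y) =>
    hay.trans_lt (by exact_mod_cast not_le.1 hk)
  have := probReal_compl_eq_one_sub (μ := binomialMeasure r hr n) (s := {k | k ≤ y})
    .of_discrete
  linarith [measureReal_mono (μ := binomialMeasure r hr n) hcompl,
    binomialMeasure_real_gt_le (hr := hr) hn hc hra]

variable {Ω : Type*} [MeasurableSpace Ω] {P : Measure Ω}

theorem measure_lt_le_of_hasLaw_binomialMeasure {Y : Ω → ℕ}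
    (hY : HasLaw Y (binomialMeasure r hr n) P) (hn : n ≠ 0) {a c : ℝ} (hc : 0 < c)
    (har : a + c ≤ r) :
    P {ω | Y ω < a * n} ≤ ENNReal.ofReal (1 / (4 * c ^ 2 * n)) := by
  rw [hY.measure_eq (p := fun k : ℕ => (k : ℝ) < a * n) .of_discrete, ← ofReal_measureReal]
  exact ENNReal.ofReal_le_ofReal (binomialMeasure_real_lt_le hn hc har)

theorem cdf_lt_one_sub_subset_of_hasLaw_binomialMeasure {X : Ω → ℕ}
    (hX : HasLaw X (binomialMeasure r hr n) P) (hn : n ≠ 0) {a c ε : ℝ} (hc : 0 < c)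
    (hra : r + c ≤ a) (hcε : 1 / (4 * c ^ 2 * n) ≤ ε) (Y : Ω → ℕ) :
    {ω | (P {ω' | X ω' ≤ Y ω}).toReal < 1 - ε} ⊆ {ω | Y ω < a * n} := fun ω hω => by
  by_contra hY
  have := one_sub_le_binomialMeasure_real_le (hr := hr) hn hc hra (not_lt.1 hY)
  rw [Set.mem_setOf_eq, ← measureReal_def,
    hX.measureReal_eq (p := (· ≤ Y ω)) .of_discrete] at hω
  linarith

end PMF

/-- If `Xₙ ~ Binomial(n, p)` and `Yₙ ~ Binomial(n, q)` are independent with `0 < p < q < 1`,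
then `F_{Xₙ}(Yₙ) → 1` in probability, where `F_{Xₙ}` is the distribution function of `Xₙ`. -/
theorem binom_cdf_at_binom_tendsto_one {Ω : Type*} [MeasurableSpace Ω] (P : Measure Ω)
    (p q : ℝ≥0∞) (hp1 : p ≤ 1) (hq1 : q ≤ 1)
    (hpq : p < q)
    (X Y : ℕ → Ω → ℕ)
    (hXdist : ∀ n, Measure.map (X n) P
      = Measure.map (fun i : Fin (n + 1) => (i : ℕ)) (PMF.binomial p.toNNReal (by simpa using ENNReal.toNNReal_mono ENNReal.one_ne_top hp1) n).toMeasure)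
    (hYdist : ∀ n, Measure.map (Y n) P
      = Measure.map (fun i : Fin (n + 1) => (i : ℕ)) (PMF.binomial q.toNNReal (by simpa using ENNReal.toNNReal_mono ENNReal.one_ne_top hq1) n).toMeasure) :
    ∀ ε : ℝ, 0 < ε →
      Tendsto (fun n : ℕ =>
          P {ω | (P {ω' | X n ω' ≤ Y n ω}).toReal < 1 - ε}) atTop (nhds 0) := by
  intro ε hε
  have hp : p.toNNReal ≤ 1 := by simpa using ENNReal.toNNReal_mono ENNReal.one_ne_top hp1
  have hq : q.toNNReal ≤ 1 := by simpa using ENNReal.toNNReal_mono ENNReal.one_ne_top hq1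
  obtain ⟨c, m, hc, hpm, hmq⟩ :
      ∃ c m : ℝ, 0 < c ∧ p.toNNReal + c ≤ m ∧ m + c ≤ q.toNNReal := by
    have : (p.toNNReal : ℝ) < q.toNNReal :=
      ENNReal.toNNReal_strict_mono (hq1.trans_lt ENNReal.one_lt_top).ne hpq
    exact ⟨(q.toNNReal - p.toNNReal) / 2, (p.toNNReal + q.toNNReal) / 2, by linarith, by linarith,
      by linarith⟩
  have hδ : Tendsto (fun n : ℕ => 1 / (4 * c ^ 2 * n)) atTop (nhds 0) := by
    have := tendsto_const_div_atTop_nhds_zero_nat (1 / (4 * c ^ 2))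
    simpa only [div_div] using this
  refine tendsto_of_tendsto_of_tendsto_of_le_of_le' tendsto_const_nhds
    (by simpa only [ENNReal.ofReal_zero] using ENNReal.tendsto_ofReal hδ)
    (.of_forall fun n => zero_le) ?_
  filter_upwards [eventually_ne_atTop 0, hδ.eventually (ge_mem_nhds hε)] with n hn hδε
  have lawX : HasLaw (X n) (PMF.binomialMeasure p.toNNReal hp n) P :=
    hasLaw_of_map_eq (hXdist n)
  have lawY : HasLaw (Y n) (PMF.binomialMeasure q.toNNReal hq n) P :=
    hasLaw_of_map_eq (hYdist n)
  calc _ ≤ P {ω | Y n ω < m * n} := measure_mono <|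
        PMF.cdf_lt_one_sub_subset_of_hasLaw_binomialMeasure lawX hn hc hpm hδε (Y n)
    _ ≤ _ := PMF.measure_lt_le_of_hasLaw_binomialMeasure lawY hn hc hmq
end

section
/- Every finite subgroup of SO(3) either fixes a plane through the origin (i.e., is conjugate to a subgroup of O(2) embedded as stabilizer of an axis) or has order at most 60. -/
/-!
A rotation `g ≠ 1` of `ℝ³` fixes exactly two unit vectors `±u`, the poles of `g`. Let `H` act
on the set `P` of poles of its nontrivial elements, with `k` orbits. Burnside's lemma gives
`|P| + 2 (|H| - 1) = k |H|`, where every orbit size divides `|H|` and is at most `|H| / 2`.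
If all orbits had at least three points, this would force `k = 3` and `|H| ∈ {12, 24, 60}`.
So for `|H| > 60` some orbit is `{x}` or `{x, y}`; a nontrivial rotation fixing `x` then also fixes
`y`, hence `y = -x`, and every element of `H` sends `x` to `±x`.
-/

open Matrix MulAction

/- Writing `a = N / p`, `b = N / q`, `c = N / r`, the hypothesis reads
`1/p + 1/q + 1/r = 1 + 2/N`; for `p ≤ q ≤ r` this forces `p = 2`, `q = 3`, `r ∈ {3, 4, 5}`. -/
theorem le_sixty_of_add_add_eq {N a b c : ℕ} (ha : a ∣ N) (hb : b ∣ N) (hc : c ∣ N)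
    (ha2 : 2 * a ≤ N) (hb2 : 2 * b ≤ N) (hc2 : 2 * c ≤ N) (ha3 : 3 ≤ a) (hb3 : 3 ≤ b)
    (hc3 : 3 ≤ c) (hsum : a + b + c = N + 2) : N ≤ 60 := by
  wlog hba : b ≤ a generalizing a b c
  · exact this hb ha hc hb2 ha2 hc2 hb3 ha3 hc3 (by omega) (by omega)
  wlog hca : c ≤ a generalizing a b c
  · exact this hc hb ha hc2 hb2 ha2 hc3 hb3 ha3 (by omega) (by omega) (by omega)
  wlog hcb : c ≤ b generalizing b c
  · exact this hc hb hc2 hb2 hc3 hb3 (by omega) hca hba (by omega)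
  obtain ⟨p, rfl⟩ := ha
  obtain ⟨q, hq⟩ := hb
  obtain ⟨r, hr⟩ := hc
  obtain rfl : p = 2 := by
    have : p < 3 := Nat.lt_of_mul_lt_mul_left (show a * p < a * 3 by omega)
    have : 2 ≤ p := Nat.le_of_mul_le_mul_left (show a * 2 ≤ a * p by omega) (by omega)
    omega
  obtain rfl : q = 3 := by
    have : q < 4 := Nat.lt_of_mul_lt_mul_left (show b * q < b * 4 by omega)
    have : q ≠ 2 := by rintro rfl; omega
    have : 2 ≤ q := Nat.le_of_mul_le_mul_left (show b * 2 ≤ b * q by omega) (by omega)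
    omega
  have : r < 6 := Nat.lt_of_mul_lt_mul_left (show c * r < c * 6 by omega)
  interval_cases r <;> omega

theorem le_sixty_of_sum_add_eq {ι : Type*} [Fintype ι] {N : ℕ} (n : ι → ℕ)
    (hdvd : ∀ i, n i ∣ N) (hhalf : ∀ i, 2 * n i ≤ N) (hthree : ∀ i, 3 ≤ n i)
    (hsum : ∑ i, n i + 2 * N = Fintype.card ι * N + 2) : N ≤ 60 := by
  have hlow : Fintype.card ι * 3 ≤ ∑ i, n i := by
    simpa using Finset.card_nsmul_le_sum Finset.univ n 3 fun i _ => hthree i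
  have hup : 2 * ∑ i, n i ≤ Fintype.card ι * N := by
    simpa [Finset.mul_sum] using
      Finset.sum_le_card_nsmul Finset.univ (2 * n ·) N fun i _ => hhalf i
  have hcard : Fintype.card ι < 4 := by
    by_contra! h
    have := Nat.mul_le_mul_right N h
    omega
  interval_cases hk : Fintype.card ι
  · omega
  · omega
  · omega
  · let e := (Fintype.equivFinOfCardEq hk).symm
    rw [← e.sum_comp, Fin.sum_univ_three] at hsum
    exact le_sixty_of_add_add_eq (a := n (e 0)) (b := n (e 1)) (c := n (e 2))
      (hdvd _) (hdvd _) (hdvd _) (hhalf _) (hhalf _) (hhalf _) (hthree _) (hthree _) (hthree _)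
      (by omega)

namespace MulAction

variable {G X : Type*} [Group G] [MulAction G X]

variable (G) in
theorem card_orbit_mul_card_stabilizer (x : X) :
    Nat.card (orbit G x) * Nat.card (stabilizer G x) = Nat.card G := by
  rw [Nat.card_coe_set_eq, ← index_stabilizer, mul_comm, Subgroup.card_mul_index]

variable [Finite G]

theorem two_mul_card_orbit_le_card {g : G} (hg : g ≠ 1) {x : X} (hgx : g • x = x) :
    2 * Nat.card (orbit G x) ≤ Nat.card G := by
  have : 1 < Nat.card (stabilizer G x) := (stabilizer G x).one_lt_card_iff_ne_bot.mpr
    fun h => hg ((Subgroup.eq_bot_iff_forall _).mp h g hgx)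
  rw [← card_orbit_mul_card_stabilizer G x, mul_comm]
  exact Nat.mul_le_mul_left _ this

theorem exists_card_orbit_le_two_of_card_fixedBy_eq_two
    (hfix : ∀ g : G, g ≠ 1 → Nat.card (fixedBy X g) = 2)
    (hstab : ∀ x : X, ∃ g : G, g ≠ 1 ∧ g • x = x) (hG : 60 < Nat.card G) :
    ∃ x : X, Nat.card (orbit G x) ≤ 2 := by
  classical
  have : Finite X := by
    refine Set.finite_univ_iff.mp <| (Set.finite_iUnion fun g : {g : G // g ≠ 1} =>
      Nat.finite_of_card_ne_zero (hfix g g.2 ▸ two_ne_zero)).subset fun x _ => ?_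
    obtain ⟨g, hg, hgx⟩ := hstab x
    exact Set.mem_iUnion.mpr ⟨⟨g, hg⟩, hgx⟩
  have := Fintype.ofFinite G
  have := Fintype.ofFinite (orbitRel.Quotient G X)
  have hsum_fix : ∑ g : G, Nat.card (fixedBy X g) + 2 = Nat.card X + 2 * Nat.card G := by
    rw [← Finset.add_sum_erase _ _ (Finset.mem_univ 1), fixedBy_one_eq_univ, Nat.card_univ,
      Finset.sum_congr rfl fun g hg => hfix g (Finset.ne_of_mem_erase hg), Finset.sum_const,
      Finset.card_erase_of_mem (Finset.mem_univ _), Finset.card_univ, smul_eq_mul,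
      Fintype.card_eq_nat_card]
    have : 0 < Nat.card G := Nat.card_pos
    omega
  have hburnside :
      ∑ g : G, Nat.card (fixedBy X g) = Nat.card (orbitRel.Quotient G X) * Nat.card G := by
    have := Fintype.ofFinite X
    simpa only [Fintype.card_eq_nat_card] using sum_card_fixedBy_eq_card_orbits_mul_card_group G X
  have hX : Nat.card X = ∑ ω : orbitRel.Quotient G X, Nat.card (orbit G ω.out) := by
    rw [Nat.card_congr (selfEquivSigmaOrbits G X), Nat.card_sigma]
  by_contra! h
  refine hG.not_ge <| le_sixty_of_sum_add_eq
    (fun ω : orbitRel.Quotient G X => Nat.card (orbit G ω.out))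
    (fun _ => Dvd.intro _ (card_orbit_mul_card_stabilizer G _)) (fun ω => ?_)
    (fun _ => h _) ?_
  · obtain ⟨g, hg, hgx⟩ := hstab ω.out
    exact two_mul_card_orbit_le_card hg hgx
  · rw [Fintype.card_eq_nat_card]
    omega

theorem smul_eq_self_of_mem_orbit_of_card_orbit_le_two {g : G} {x y : X}
    (hx : Nat.card (orbit G x) ≤ 2) (hgx : g • x = x) (hy : y ∈ orbit G x) : g • y = y := by
  by_contra hgy
  have hxy : x ≠ y := by rintro rfl; exact hgy hgx
  have hgyx : g • y ≠ x := fun h => hxy (smul_left_cancel g (h.trans hgx.symm)).symm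
  have hsub : ({x, y, g • y} : Set X) ⊆ orbit G x := by
    simp only [Set.insert_subset_iff, Set.singleton_subset_iff]
    exact ⟨mem_orbit_self x, hy, mem_orbit_of_mem_orbit g hy⟩
  have h3 := Set.ncard_le_ncard hsub (Set.finite_range _)
  rw [Set.ncard_eq_three.mpr ⟨x, y, g • y, hxy, hgyx.symm, Ne.symm hgy, rfl⟩] at h3
  rw [Nat.card_coe_set_eq] at hx
  omega

end MulAction

namespace Matrix

theorem transpose_mulVec_cross_mulVec {R : Type*} [CommRing R] (A : Matrix (Fin 3) (Fin 3) R)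
    (x y : Fin 3 → R) : Aᵀ *ᵥ (A *ᵥ x) ⨯₃ (A *ᵥ y) = A.det • x ⨯₃ y := by
  ext i
  fin_cases i <;>
    simp [cross_apply, det_fin_three, mulVec, dotProduct, Fin.sum_univ_three] <;> ring

theorem eq_one_of_mulVec_eq_self_of_isUnit_det {n R : Type*} [Fintype n] [DecidableEq n]
    [CommRing R] {A M : Matrix n n R} (hM : IsUnit M.det) (hA : ∀ i, A *ᵥ M i = M i) :
    A = 1 := by
  have hMA : M * Aᵀ = M * 1 := by
    ext i : 1
    rw [mul_apply_eq_vecMul, vecMul_transpose, hA, mul_one]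
  simpa using congrArg transpose (((isUnit_iff_isUnit_det M).mpr hM).mul_left_cancel hMA)

namespace orthogonalGroup

variable {n R : Type*} [Fintype n] [DecidableEq n] [CommRing R]

instance : DistribMulAction (orthogonalGroup n R) (n → R) where
  smul g v := (g : Matrix n n R) *ᵥ v
  one_smul := one_mulVec
  mul_smul g h v := (mulVec_mulVec v g.1 h.1).symm
  smul_zero _ := mulVec_zero _
  smul_add _ := mulVec_add _

/- A shortcut: without it, finding this instance through `Subgroup.instMulAction` first explores
`Pi` and algebra instances and exceeds the default budget. -/
instance (H : Subgroup (orthogonalGroup n R)) : SMul H (n → R) :=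
  ⟨fun h v => (h : orthogonalGroup n R) • v⟩

theorem smul_def (g : orthogonalGroup n R) (v : n → R) : g • v = (g : Matrix n n R) *ᵥ v :=
  rfl

theorem transpose_mul_self (g : orthogonalGroup n R) : (g : Matrix n n R)ᵀ * g = 1 :=
  (mem_orthogonalGroup_iff' n R).mp g.2

theorem mul_transpose_self (g : orthogonalGroup n R) :
    (g : Matrix n n R) * (g : Matrix n n R)ᵀ = 1 :=
  (mem_orthogonalGroup_iff n R).mp g.2

theorem dotProduct_smul_smul (g : orthogonalGroup n R) (v w : n → R) :
    (g • v) ⬝ᵥ (g • w) = v ⬝ᵥ w := by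
  rw [smul_def, smul_def, dotProduct_mulVec, ← mulVec_transpose, mulVec_mulVec,
    transpose_mul_self, one_mulVec]

end orthogonalGroup

theorem orthogonalGroup.exists_smul_eq_self_of_det_eq_one {n K : Type*} [Fintype n]
    [DecidableEq n] [Field K] [CharZero K] (hn : Odd (Fintype.card n)) {g : orthogonalGroup n K}
    (hg : (g : Matrix n n K).det = 1) : ∃ v : n → K, v ≠ 0 ∧ g • v = v := by
  set A : Matrix n n K := (g : Matrix n n K)
  have hsub : A - 1 = A * (1 - A)ᵀ := by
    rw [transpose_sub, transpose_one, mul_sub, mul_one, mul_transpose_self]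
  have hdet : (A - 1).det = -(A - 1).det :=
    calc (A - 1).det = (1 - A).det := by rw [hsub, det_mul, hg, one_mul, det_transpose]
      _ = -(A - 1).det := by rw [← neg_sub, det_neg, hn.neg_one_pow, neg_one_mul]
  obtain ⟨v, hv0, hv⟩ := exists_mulVec_eq_zero_iff.mpr (self_eq_neg.mp hdet)
  exact ⟨v, hv0, by rwa [sub_mulVec, one_mulVec, sub_eq_zero] at hv⟩

theorem orthogonalGroup.exists_dotProduct_self_eq_one_smul_eq_self {n : Type*} [Fintype n]
    [DecidableEq n] (hn : Odd (Fintype.card n)) {g : orthogonalGroup n ℝ}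
    (hg : (g : Matrix n n ℝ).det = 1) : ∃ u : n → ℝ, u ⬝ᵥ u = 1 ∧ g • u = u := by
  obtain ⟨v, hv0, hv⟩ := exists_smul_eq_self_of_det_eq_one hn hg
  have hvv : 0 < v ⬝ᵥ v := by simpa using dotProduct_self_star_pos_iff.mpr hv0
  refine ⟨(√(v ⬝ᵥ v))⁻¹ • v, ?_, ?_⟩
  · rw [smul_dotProduct, dotProduct_smul, smul_smul, smul_eq_mul, ← mul_inv,
      Real.mul_self_sqrt hvv.le, inv_mul_cancel₀ hvv.ne']
  · rw [smul_def, mulVec_smul, ← smul_def, hv]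

namespace orthogonalGroup

variable {g : orthogonalGroup (Fin 3) ℝ}

theorem eq_one_of_smul_eq_self_of_linearIndependent (hg : (g : Matrix (Fin 3) (Fin 3) ℝ).det = 1)
    {x y : Fin 3 → ℝ} (hxy : LinearIndependent ℝ ![x, y]) (hx : g • x = x)
    (hy : g • y = y) :
    g = 1 := by
  have hcross : g • x ⨯₃ y = x ⨯₃ y := by
    have h := transpose_mulVec_cross_mulVec (g : Matrix (Fin 3) (Fin 3) ℝ) x y
    rw [hg, one_smul, ← smul_def, ← smul_def, hx, hy] at h
    calc g • x ⨯₃ y = g • ((g : Matrix (Fin 3) (Fin 3) ℝ)ᵀ *ᵥ x ⨯₃ y) := by rw [h]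
      _ = x ⨯₃ y := by rw [smul_def, mulVec_mulVec, mul_transpose_self, one_mulVec]
  have hdet : IsUnit (Matrix.det ![x, y, x ⨯₃ y]) := by
    rw [isUnit_iff_ne_zero, ← triple_product_eq_det, triple_product_permutation,
      triple_product_permutation, Ne, dotProduct_self_eq_zero]
    exact crossProduct_ne_zero_iff_linearIndependent.mpr hxy
  refine Subtype.ext (eq_one_of_mulVec_eq_self_of_isUnit_det hdet fun i => ?_)
  fin_cases i
  exacts [hx, hy, hcross]

theorem eq_or_eq_neg_of_smul_eq_self (hg : (g : Matrix (Fin 3) (Fin 3) ℝ).det = 1) (hg1 : g ≠ 1)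
    {x y : Fin 3 → ℝ} (hxx : x ⬝ᵥ x = 1) (hyy : y ⬝ᵥ y = 1) (hx : g • x = x)
    (hy : g • y = y) :
    y = x ∨ y = -x := by
  have hx0 : x ≠ 0 := by rintro rfl; simp at hxx
  obtain ⟨c, rfl⟩ : ∃ c : ℝ, c • x = y := by
    by_contra! h
    exact hg1 (eq_one_of_smul_eq_self_of_linearIndependent hg
      ((LinearIndependent.pair_iff' hx0).mpr h) hx hy)
  have hc : c * c = 1 := by simpa [hxx] using hyy
  rcases mul_self_eq_one_iff.mp hc with rfl | rfl <;> simp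

variable (H : Subgroup (orthogonalGroup (Fin 3) ℝ))

def poles : Set (Fin 3 → ℝ) := {x | x ⬝ᵥ x = 1 ∧ ∃ g : H, g ≠ 1 ∧ g • x = x}

theorem smul_mem_poles (h : H) {x : Fin 3 → ℝ} (hx : x ∈ poles H) : h • x ∈ poles H := by
  obtain ⟨hxx, g, hg, hgx⟩ := hx
  refine ⟨by rw [Subgroup.smul_def, dotProduct_smul_smul, hxx], h * g * h⁻¹,
    by simpa using hg, ?_⟩
  rw [mul_smul, mul_smul, inv_smul_smul, hgx]

instance : MulAction H (poles H) where
  smul h x := ⟨h • x.1, smul_mem_poles H h x.2⟩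
  one_smul x := Subtype.ext (one_smul H x.1)
  mul_smul g h x := Subtype.ext (mul_smul g h x.1)

variable {H}

theorem card_fixedBy_poles (hdet : ∀ g ∈ H, (g : Matrix (Fin 3) (Fin 3) ℝ).det = 1) {g : H}
    (hg : g ≠ 1) : Nat.card (fixedBy (poles H) g) = 2 := by
  have hg' : (g : orthogonalGroup (Fin 3) ℝ) ≠ 1 := by simpa using hg
  obtain ⟨u, huu, hu⟩ := exists_dotProduct_self_eq_one_smul_eq_self (by decide) (hdet g g.2)
  change g • u = u at hu
  have hnu : g • -u = -u := by rw [smul_neg, hu]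
  let p : poles H := ⟨u, huu, g, hg, hu⟩
  let q : poles H := ⟨-u, by simpa using huu, g, hg, hnu⟩
  have hpq : p ≠ q := fun h => by
    have := congrArg (fun z : poles H => u ⬝ᵥ z.1) h
    norm_num [p, q, huu] at this
  have hfix : fixedBy (poles H) g = {p, q} := by
    ext z
    simp only [mem_fixedBy, Set.mem_insert_iff, Set.mem_singleton_iff]
    constructor
    · intro hz
      simpa only [Subtype.ext_iff] using
        eq_or_eq_neg_of_smul_eq_self (hdet g g.2) hg' huu z.2.1 hu (congrArg Subtype.val hz)
    · rintro (rfl | rfl)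
      exacts [Subtype.ext hu, Subtype.ext hnu]
  rw [hfix, Nat.card_coe_set_eq, Set.ncard_pair hpq]

theorem smul_eq_or_eq_neg_of_card_orbit_le_two [Finite H]
    (hdet : ∀ g ∈ H, (g : Matrix (Fin 3) (Fin 3) ℝ).det = 1) {x : poles H}
    (hx : Nat.card (orbit H x) ≤ 2) (g : H) :
    g • (x : Fin 3 → ℝ) = x ∨ g • (x : Fin 3 → ℝ) = -x := by
  obtain ⟨hxx, g₀, hg₀, hg₀x⟩ := x.2
  have hg₀y : g₀ • g • (x : Fin 3 → ℝ) = g • x := congrArg Subtype.val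
    (smul_eq_self_of_mem_orbit_of_card_orbit_le_two hx (Subtype.ext hg₀x) (mem_orbit x g))
  exact eq_or_eq_neg_of_smul_eq_self (hdet g₀ g₀.2) (by simpa using hg₀) hxx (g • x).2.1 hg₀x
    hg₀y

end orthogonalGroup

end Matrix

/-- Every finite subgroup of `SO(3)` — i.e. a finite subgroup of the orthogonal group
`O(3)` all of whose elements have determinant `1` — either fixes a plane through the
origin (equivalently, there is a nonzero normal vector `v` sent to `±v` by every element)
or has order at most `60`. -/
theorem finite_subgroup_SO3_fixes_plane_or_card_le_60
    (H : Subgroup (Matrix.orthogonalGroup (Fin 3) ℝ)) [Finite H]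
    (hdet : ∀ g ∈ H, Matrix.det (g : Matrix (Fin 3) (Fin 3) ℝ) = 1) :
    (∃ v : Fin 3 → ℝ, v ≠ 0 ∧ ∀ g ∈ H,
      Matrix.mulVec (g : Matrix (Fin 3) (Fin 3) ℝ) v = v ∨
      Matrix.mulVec (g : Matrix (Fin 3) (Fin 3) ℝ) v = -v) ∨
    Nat.card H ≤ 60 := by
  by_cases hH : Nat.card H ≤ 60
  · exact .inr hH
  obtain ⟨x, hx⟩ := exists_card_orbit_le_two_of_card_fixedBy_eq_two
    (fun _ hg => orthogonalGroup.card_fixedBy_poles hdet hg)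
    (fun x => x.2.2.imp fun _ ⟨hg, hgx⟩ => ⟨hg, Subtype.ext hgx⟩) (not_le.mp hH)
  refine .inl ⟨x, fun h => by simpa [h] using x.2.1, fun g hg => ?_⟩
  exact orthogonalGroup.smul_eq_or_eq_neg_of_card_orbit_le_two hdet hx ⟨g, hg⟩
end
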